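/- arXiv:2306.16403 — 4 statements merged into one kernel-verified Lean document; each statement's English description precedes it below -/
import Mathlib

section
/- Let p ∈ [2,∞] be fixed and assume the real-valued random field (X_t)_{t∈ℕ^d} (with X_t ∈ L^p) satisfies assumption WD(p) with constant M_p and function φ_p. Then for any finite product set A = ∏_{i=1}^d A_i ⊂ ℕ^d, the compressed field (X̃^{(A)}_t)_{t∈ℕ^d} satisfies assumption WD(p) with the same constant M_p and the same function φ_p. -/
open MeasureTheory Finset
open scoped ENNReal

noncomputable section

/-- The σ-algebra `𝓜_{t,r}` generated by `{X_u : sup_i (t_i - u_i) ≥ r}`, for a field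
indexed by `ℕ^d`. -/
def sigMN {Ω : Type*} {d : ℕ} (X : (Fin d → ℕ) → Ω → ℝ) (t : Fin d → ℕ) (r : ℕ) :
    MeasurableSpace Ω :=
  ⨆ u ∈ {u : Fin d → ℕ | ∃ i, u i + r ≤ t i},
    MeasurableSpace.comap (X u) Real.measurableSpace

/-- `(j : B)`: the `(j+1)`-th element of the finite set `B ⊂ ℕ` in increasing order. -/
def nthElt (B : Finset ℕ) (j : ℕ) : ℕ :=
  (B.sort (· ≤ ·)).getD j 0

/-- The "compressed" field `X̃^{(A)}`, for a product set `A = ∏_i A_i`: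
`X̃^{(A)}_t = X_{(t:A)}` if `t ∈ K(A) = ∏_i {0,…,|A_i|−1}`, and `0` otherwise. -/
def compress {Ω : Type*} {d : ℕ} (X : (Fin d → ℕ) → Ω → ℝ) (A : Fin d → Finset ℕ) :
    (Fin d → ℕ) → Ω → ℝ :=
  fun t => if ∀ i, t i < (A i).card then X (fun i => nthElt (A i) (t i)) else 0

/-! Since `j ↦ (j:A_i)` is strictly increasing on `ℕ`, a lag `r` in the compressed field is a
lag of at least `r` in the original one, so the past `𝓜̃_{t,r}` of the compressed field is
contained in the past `𝓜_{(t:A),r}` of the original field. By the tower property,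
`E[X̃_t | 𝓜̃_{t,r}] - E X̃_t` is then the conditional expectation onto the smaller σ-algebra of
`E[X_{(t:A)} | 𝓜_{(t:A),r}] - E X_{(t:A)}`, and conditional expectation contracts `Lᵖ`.
Outside `K(A)` the compressed field vanishes and there is nothing to prove. -/

theorem List.SortedLT.getElem_add_sub_le {l : List ℕ} (hl : l.SortedLT) {j k : ℕ}
    (hjk : j ≤ k) (hk : k < l.length) : l[j] + (k - j) ≤ l[k] := by
  induction k, hjk using Nat.le_induction with
  | base => simp
  | succ k hjk ih =>
    have hlt : l[k] < l[k + 1] := (hl.getElem_lt_getElem_iff).2 (Nat.lt_succ_self k)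
    have := ih (by omega)
    omega

theorem nthElt_add_le {B : Finset ℕ} {j k r : ℕ} (hjk : j + r ≤ k) (hk : k < B.card) :
    nthElt B j + r ≤ nthElt B k := by
  have hk' : k < (B.sort (· ≤ ·)).length := by rwa [Finset.length_sort]
  rw [nthElt, nthElt, List.getD_eq_getElem _ _ (by omega), List.getD_eq_getElem _ _ hk']
  have := B.sortedLT_sort.getElem_add_sub_le (j := j) (by omega) hk'
  omega

section Compress

variable {Ω : Type*} {d : ℕ} {X : (Fin d → ℕ) → Ω → ℝ} {A : Fin d → Finset ℕ}
  {t : Fin d → ℕ}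

theorem compress_of_forall_lt (ht : ∀ i, t i < (A i).card) :
    compress X A t = X (fun i => nthElt (A i) (t i)) :=
  if_pos ht

theorem compress_of_not_forall_lt (ht : ¬ ∀ i, t i < (A i).card) : compress X A t = 0 :=
  if_neg ht

theorem sigMN_le [m0 : MeasurableSpace Ω] (hX : ∀ u, Measurable (X u)) (t : Fin d → ℕ)
    (r : ℕ) : sigMN X t r ≤ m0 :=
  iSup₂_le fun u _ => (hX u).comap_le

theorem sigMN_compress_le (ht : ∀ i, t i < (A i).card) (r : ℕ) :
    sigMN (compress X A) t r ≤ sigMN X (fun i => nthElt (A i) (t i)) r := by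
  refine iSup₂_le fun u ⟨i, hi⟩ => ?_
  by_cases hu : ∀ i, u i < (A i).card
  · rw [compress_of_forall_lt hu]
    exact le_iSup₂_of_le (f := fun v _ => MeasurableSpace.comap (X v) Real.measurableSpace)
      (fun i => nthElt (A i) (u i)) ⟨i, nthElt_add_le hi (ht i)⟩ le_rfl
  · rw [compress_of_not_forall_lt hu]
    exact (@measurable_const ℝ Ω _ (sigMN X _ r) 0).comap_le

end Compress

theorem eLpNorm_condExp_sub_const_le_of_le {Ω E : Type*} [NormedAddCommGroup E]
    [NormedSpace ℝ E] [CompleteSpace E] {m₁ m₂ m0 : MeasurableSpace Ω} {μ : Measure Ω}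
    [IsFiniteMeasure μ] (hm₁₂ : m₁ ≤ m₂) (hm₂ : m₂ ≤ m0) (f : Ω → E) (c : E)
    {p : ℝ≥0∞} (hp : 1 ≤ p) :
    eLpNorm (μ[f | m₁] - fun _ => c) p μ ≤ eLpNorm (μ[f | m₂] - fun _ => c) p μ := by
  have htower : μ[μ[f | m₂] - (fun _ => c) | m₁] =ᵐ[μ] μ[f | m₁] - fun _ => c := by
    filter_upwards [condExp_sub (integrable_condExp (m := m₂) (f := f)) (integrable_const c) m₁,
      condExp_condExp_of_le (f := f) hm₁₂ hm₂] with ω hsub htow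
    rw [hsub, Pi.sub_apply, htow, condExp_const (hm₁₂.trans hm₂)]
    rfl
  rw [← eLpNorm_congr_ae htower]
  exact eLpNorm_condExp_le_eLpNorm _ hp

theorem compress_weak_dependence_general
    {Ω : Type*} [MeasurableSpace Ω] (μ : Measure Ω) [IsProbabilityMeasure μ]
    (d : ℕ) (p : ℝ≥0∞) (hp : 2 ≤ p)
    (X : (Fin d → ℕ) → Ω → ℝ)
    (hXmeas : ∀ t, Measurable (X t))
    (M : ℝ) (φ : ℕ → ℝ)
    (hWD : ∀ (t : Fin d → ℕ) (r : ℕ), 0 < r →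
      eLpNorm (μ[X t | sigMN X t r] - fun _ => ∫ ω, X t ω ∂μ) p μ
        ≤ ENNReal.ofReal (M * φ r))
    (A : Fin d → Finset ℕ) :
    ∀ (t : Fin d → ℕ) (r : ℕ), 0 < r →
      eLpNorm (μ[compress X A t | sigMN (compress X A) t r]
          - fun _ => ∫ ω, compress X A t ω ∂μ) p μ
        ≤ ENNReal.ofReal (M * φ r) := by
  intro t r hr
  by_cases ht : ∀ i, t i < (A i).card
  · rw [compress_of_forall_lt ht]
    exact (eLpNorm_condExp_sub_const_le_of_le (sigMN_compress_le ht r) (sigMN_le hXmeas _ r) _ _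
      (one_le_two.trans hp)).trans (hWD _ r hr)
  · simp [compress_of_not_forall_lt ht]

/-- Lemma: if `(X_t)_{t ∈ ℕ^d}` satisfies `WD(p)` with constant `M` and function `φ`, then
for any finite product set `A = ∏_i A_i` the compressed field `X̃^{(A)}` satisfies `WD(p)`
with the same constant and function. -/
theorem compress_weak_dependence
    {Ω : Type*} [MeasurableSpace Ω] (μ : Measure Ω) [IsProbabilityMeasure μ]
    (d : ℕ) (p : ℝ≥0∞) (hp : 2 ≤ p)
    (X : (Fin d → ℕ) → Ω → ℝ)
    (hXmeas : ∀ t, Measurable (X t))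
    (hXLp : ∀ t, MemLp (X t) p μ)
    (M : ℝ) (φ : ℕ → ℝ) (hφanti : Antitone φ) (hφ0 : φ 0 = 1)
    (hWD : ∀ (t : Fin d → ℕ) (r : ℕ), 0 < r →
      eLpNorm (μ[X t | sigMN X t r] - fun _ => ∫ ω, X t ω ∂μ) p μ
        ≤ ENNReal.ofReal (M * φ r))
    (A : Fin d → Finset ℕ) :
    ∀ (t : Fin d → ℕ) (r : ℕ), 0 < r →
      eLpNorm (μ[compress X A t | sigMN (compress X A) t r]
          - fun _ => ∫ ω, compress X A t ω ∂μ) p μ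
        ≤ ENNReal.ofReal (M * φ r) :=
  compress_weak_dependence_general μ d p hp X hXmeas M φ hWD A
end
end

section
/- Let ≼ be the total order on ℕ^d defined via dyadic projections. For any t ∈ ℕ^d and natural numbers k, ℓ with k ≥ ℓ, it holds π_k(t) ≼ π_ℓ(t). In particular π_k(t) ≼ t for every k. -/
open MeasureTheory Finset
open scoped ENNReal

noncomputable section

/-- Dyadic projection at scale `k`: `π_k(t)_i = ⌊t_i / 2^k⌋ · 2^k`. -/
def proj {d : ℕ} (k : ℕ) (t : Fin d → ℕ) : Fin d → ℕ :=
  fun i => t i / 2 ^ k * 2 ^ k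

/-- Strict lexicographical order on `ℕ^d`. -/
def lexLT {d : ℕ} (t t' : Fin d → ℕ) : Prop :=
  ∃ i, (∀ j, j < i → t j = t' j) ∧ t i < t' i

/-- `κ(t,t') + 1 = min{k : π_k(t) = π_k(t')}`. -/
def kappaSucc {d : ℕ} (t t' : Fin d → ℕ) : ℕ :=
  sInf {k | proj k t = proj k t'}

/-- The total order `≼` on `ℕ^d`: `t ≼ t'` iff `t = t'` or
`π_{κ(t,t')}(t) <_lex π_{κ(t,t')}(t')` where `κ(t,t') = min{k : π_k(t) = π_k(t')} − 1`. -/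
def dyadicLE {d : ℕ} (t t' : Fin d → ℕ) : Prop :=
  t = t' ∨ lexLT (proj (kappaSucc t t' - 1) t) (proj (kappaSucc t t' - 1) t')

/-- The strict order `≺` associated to `≼`. -/
def dyadicLT {d : ℕ} (t t' : Fin d → ℕ) : Prop :=
  dyadicLE t t' ∧ t ≠ t'

/-- `Π_k^≺(t) = {t' : π_k(t') ≺ π_k(t)}`. -/
def PiPrec {d : ℕ} (k : ℕ) (t : Fin d → ℕ) : Set (Fin d → ℕ) :=
  {t' | dyadicLT (proj k t') (proj k t)}

/-- `Π_k(t) = {t' : π_k(t') ≼ π_k(t)}`. -/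
def PiLE {d : ℕ} (k : ℕ) (t : Fin d → ℕ) : Set (Fin d → ℕ) :=
  {t' | dyadicLE (proj k t') (proj k t)}

/-- The dyadic cell `C_{k,b} = {b} + {0,…,2^k−1}^d`. -/
def cell {d : ℕ} (k : ℕ) (b : Fin d → ℕ) : Set (Fin d → ℕ) :=
  {t | ∀ i, b i ≤ t i ∧ t i < b i + 2 ^ k}

lemma proj_mono {d : ℕ} (m : ℕ) {s t : Fin d → ℕ} (h : ∀ i, s i ≤ t i) (i : Fin d) :
    proj m s i ≤ proj m t i := by
  exact Nat.mul_le_mul_right _ (Nat.div_le_div_right (h i))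

lemma le_dyadicLE {d : ℕ} {s t : Fin d → ℕ} (h : ∀ i, s i ≤ t i) : dyadicLE s t := by
  by_cases hst : s = t
  · exact Or.inl hst
  · right
    set K := kappaSucc s t with hK
    -- K ≥ 1, and proj (K-1) s ≠ proj (K-1) t
    have hne : {k | proj k s = proj k t}.Nonempty := by
      refine ⟨Finset.univ.sup t, funext fun i => ?_⟩
      have hti : t i ≤ Finset.univ.sup t := Finset.le_sup (Finset.mem_univ i)
      have hlt : t i < 2 ^ Finset.univ.sup t :=
        lt_of_le_of_lt hti Nat.lt_two_pow_self
      have hs : s i < 2 ^ Finset.univ.sup t := lt_of_le_of_lt (h i) hlt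
      simp [proj, Nat.div_eq_of_lt hs, Nat.div_eq_of_lt hlt]
    have h0 : proj 0 s ≠ proj 0 t := by
      have : proj 0 s = s := by funext i; simp [proj]
      have ht0 : proj 0 t = t := by funext i; simp [proj]
      rw [this, ht0]; exact hst
    have hKpos : 1 ≤ K := by
      rcases Nat.eq_zero_or_pos K with h0' | h0'
      · rcases Nat.sInf_eq_zero.mp h0' with hmem | hemp
        · exact absurd hmem h0
        · rw [hemp] at hne; exact absurd hne (by simp)
      · exact h0'
    have hKne : proj (K - 1) s ≠ proj (K - 1) t := by
      have : K - 1 ∉ {k | proj k s = proj k t} :=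
        Nat.notMem_of_lt_sInf (Nat.sub_lt hKpos one_pos)
      exact this
    -- extract the minimal differing coordinate
    set m := K - 1
    have hSne : (Finset.univ.filter fun i => proj m s i ≠ proj m t i).Nonempty := by
      by_contra hc
      apply hKne
      funext i
      by_contra hi
      exact hc ⟨i, Finset.mem_filter.mpr ⟨Finset.mem_univ i, hi⟩⟩
    set S := Finset.univ.filter fun i => proj m s i ≠ proj m t i
    refine ⟨S.min' hSne, fun j hj => ?_, ?_⟩
    · by_contra hjne
      exact absurd (S.min'_le j (Finset.mem_filter.mpr ⟨Finset.mem_univ j, hjne⟩))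
        (not_le.mpr hj)
    · have hi : S.min' hSne ∈ S := S.min'_mem hSne
      have hine := (Finset.mem_filter.mp hi).2
      exact lt_of_le_of_ne (proj_mono m h _) hine

/-- Lemma (ii): for `k ≥ ℓ`, `π_k(t) ≼ π_ℓ(t)`; in particular `π_k(t) ≼ t`. -/
theorem proj_dyadicLE (d : ℕ) (t : Fin d → ℕ) (k ℓ : ℕ) (hkl : ℓ ≤ k) :
    dyadicLE (proj k t) (proj ℓ t) ∧ ∀ k' : ℕ, dyadicLE (proj k' t) t := by
  constructor
  · apply le_dyadicLE
    intro i
    show t i / 2 ^ k * 2 ^ k ≤ t i / 2 ^ ℓ * 2 ^ ℓ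
    have h2 : 2 ^ k = 2 ^ ℓ * 2 ^ (k - ℓ) := by
      rw [← pow_add, Nat.add_sub_cancel' hkl]
    calc t i / 2 ^ k * 2 ^ k = t i / 2 ^ ℓ / 2 ^ (k - ℓ) * 2 ^ (k - ℓ) * 2 ^ ℓ := by
          rw [h2, Nat.div_div_eq_div_mul]; ring
      _ ≤ t i / 2 ^ ℓ * 2 ^ ℓ :=
          Nat.mul_le_mul_right _ (Nat.div_mul_le_self _ _)
  · intro k'
    exact le_dyadicLE fun i => Nat.div_mul_le_self _ _
end
end

section
/- Let ≼ be the total order on ℕ^d defined via dyadic projections. For every k ∈ ℕ, the map π_k is monotone nondecreasing for ≼: for all t, t' ∈ ℕ^d, t ≼ t' implies π_k(t) ≼ π_k(t'). -/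
open MeasureTheory Finset
open scoped ENNReal

noncomputable section

lemma proj_proj_of_le {d : ℕ} {k m : ℕ} (h : k ≤ m) (t : Fin d → ℕ) :
    proj m (proj k t) = proj m t := by
  funext i
  simp only [proj]
  obtain ⟨c, rfl⟩ := Nat.exists_eq_add_of_le h
  rw [pow_add, ← Nat.div_div_eq_div_mul, Nat.mul_div_cancel _ (Nat.pow_pos (n := k) (by norm_num)),
    Nat.div_div_eq_div_mul]

lemma proj_proj_of_ge {d : ℕ} {k m : ℕ} (h : m ≤ k) (t : Fin d → ℕ) :
    proj m (proj k t) = proj k t := by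
  funext i
  simp only [proj]
  exact Nat.div_mul_cancel (dvd_trans (pow_dvd_pow 2 h) (dvd_mul_left _ _))

lemma proj_eq_exists {d : ℕ} (t t' : Fin d → ℕ) : ∃ k, proj k t = proj k t' := by
  set M := Finset.univ.sup (fun i => max (t i) (t' i)) with hM
  refine ⟨M + 1, ?_⟩
  have h2 : M < 2 ^ (M + 1) := (Nat.lt_two_pow_self (n := M)) |>.trans (Nat.pow_lt_pow_succ one_lt_two)
  funext i
  have h1 : t i ≤ M := le_trans (le_max_left _ _)
    (Finset.le_sup (f := fun i => max (t i) (t' i)) (Finset.mem_univ i))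
  have h1' : t' i ≤ M := le_trans (le_max_right _ _)
    (Finset.le_sup (f := fun i => max (t i) (t' i)) (Finset.mem_univ i))
  simp only [proj]
  rw [Nat.div_eq_of_lt (lt_of_le_of_lt h1 h2), Nat.div_eq_of_lt (lt_of_le_of_lt h1' h2)]

lemma proj_eq_mono {d : ℕ} {k m : ℕ} (h : k ≤ m) {t t' : Fin d → ℕ}
    (he : proj k t = proj k t') : proj m t = proj m t' := by
  rw [← proj_proj_of_le h t, he, proj_proj_of_le h]

/-- Lemma (iii): every `π_k` is monotone nondecreasing with respect to `≼`. -/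
theorem proj_monotone_dyadic (d k : ℕ) (t t' : Fin d → ℕ) (h : dyadicLE t t') :
    dyadicLE (proj k t) (proj k t') := by
  rcases h with rfl | hlex
  · exact Or.inl rfl
  set K := kappaSucc t t' with hKdef
  have hne : (Set.Nonempty {m | proj m t = proj m t'}) := proj_eq_exists t t'
  have hK : proj K t = proj K t' := Nat.sInf_mem hne
  rcases le_or_gt K k with hk | hk
  · exact Or.inl (proj_eq_mono hk hK)
  · -- k < K
    have hkK : k ≤ K - 1 := Nat.le_sub_one_of_lt hk
    have hKS : kappaSucc (proj k t) (proj k t') = K := by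
      have hmem : K ∈ {m | proj m (proj k t) = proj m (proj k t')} := by
        show proj K (proj k t) = proj K (proj k t')
        rw [proj_proj_of_le hk.le, proj_proj_of_le hk.le, hK]
      refine le_antisymm (Nat.sInf_le hmem) ?_
      by_contra hlt
      push_neg at hlt
      have hmem' : sInf {m | proj m (proj k t) = proj m (proj k t')}
          ∈ {m | proj m (proj k t) = proj m (proj k t')} := Nat.sInf_mem ⟨K, hmem⟩
      set m := sInf {m | proj m (proj k t) = proj m (proj k t')} with hm
      have hmK : m < K := hlt
      rcases le_or_gt k m with hkm | hmk
      · have : proj m t = proj m t' := by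
          rw [← proj_proj_of_le hkm t, hmem', proj_proj_of_le hkm]
        exact absurd this (Nat.notMem_of_lt_sInf hmK)
      · have : proj k t = proj k t' := by
          rw [← proj_proj_of_ge hmk.le t, hmem', proj_proj_of_ge hmk.le]
        exact absurd this (Nat.notMem_of_lt_sInf hk)
    right
    rw [hKS, proj_proj_of_le hkK, proj_proj_of_le hkK]
    exact hlex
end
end

section
/- For any k ∈ ℕ, any integer δ with 0 ≤ δ < 2^k, and any t ∈ (ℕ \ Λ_{k,δ})^d, every t' ∈ Π_k^≺(t) satisfies ‖t − t'‖_∞ ≥ δ + 1; that is, the ℓ_∞ distance from t to the set Π_k^≺(t) is at least δ + 1. -/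
open MeasureTheory Finset
open scoped ENNReal

noncomputable section

/-- The set `Λ_{k,δ} = 2^k ℕ_{>0} + {0,…,δ−1} ⊂ ℕ` (empty if `δ = 0`). -/
def Lambda (k δ : ℕ) : Set ℕ :=
  {x | ∃ q j, 0 < q ∧ j < δ ∧ x = q * 2 ^ k + j}

lemma proj_proj {d : ℕ} (m k : ℕ) (x : Fin d → ℕ) :
    proj m (proj k x) = proj (max m k) x := by
  funext i
  simp only [proj]
  rcases le_total m k with h | h
  · rw [max_eq_right h]
    obtain ⟨c, rfl⟩ : ∃ c, k = m + c := ⟨k - m, by omega⟩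
    rw [pow_add, show x i / (2 ^ m * 2 ^ c) * (2 ^ m * 2 ^ c)
        = x i / (2 ^ m * 2 ^ c) * 2 ^ c * 2 ^ m by ring,
      Nat.mul_div_cancel _ (by positivity)]
  · rw [max_eq_left h]
    obtain ⟨c, rfl⟩ : ∃ c, m = k + c := ⟨m - k, by omega⟩
    rw [pow_add, ← Nat.div_div_eq_div_mul, Nat.mul_div_cancel _ (by positivity : (0:ℕ) < 2 ^ k),
      Nat.div_div_eq_div_mul]

lemma key_sep (k M δ a b : ℕ) (hkM : k ≤ M) (hδ : δ < 2 ^ k)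
    (hb : b ∉ Lambda k δ) (h : a / 2 ^ M < b / 2 ^ M) :
    (δ : ℤ) + 1 ≤ (b : ℤ) - (a : ℤ) := by
  have hda : 2 ^ M * (a / 2 ^ M) + a % 2 ^ M = a := Nat.div_add_mod _ _
  have hdb : 2 ^ M * (b / 2 ^ M) + b % 2 ^ M = b := Nat.div_add_mod _ _
  have hra : a % 2 ^ M < 2 ^ M := Nat.mod_lt _ (by positivity)
  have hmul : 2 ^ M * (a / 2 ^ M + 1) ≤ 2 ^ M * (b / 2 ^ M) :=
    Nat.mul_le_mul_left _ h
  -- `b % 2^M ≥ δ`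
  have hrb : δ ≤ b % 2 ^ M := by
    by_contra hlt
    push_neg at hlt
    apply hb
    have hmodk : b % 2 ^ k = b % 2 ^ M := by
      rw [← Nat.mod_mod_of_dvd b (pow_dvd_pow 2 hkM)]
      exact Nat.mod_eq_of_lt (by omega)
    refine ⟨b / 2 ^ k, b % 2 ^ k, ?_, by omega, (Nat.div_add_mod' b (2 ^ k)).symm⟩
    have hq : 1 ≤ b / 2 ^ M := lt_of_le_of_lt (Nat.zero_le _) h
    have hbM : 2 ^ M ≤ b := by
      calc 2 ^ M = 2 ^ M * 1 := (mul_one _).symm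
        _ ≤ 2 ^ M * (b / 2 ^ M) := Nat.mul_le_mul_left _ hq
        _ ≤ b := Nat.le.intro hdb
    have hbk : 2 ^ k ≤ b := le_trans (Nat.pow_le_pow_right (by norm_num) hkM) hbM
    exact Nat.div_pos hbk (by positivity)
  zify at hda hdb hmul hra hrb ⊢
  linarith

/-- Separation lemma: if `t ∈ (ℕ \ Λ_{k,δ})^d` with `δ < 2^k`, then every `t' ∈ Π_k^≺(t)`
satisfies `‖t − t'‖_∞ ≥ δ + 1`, i.e. some coordinate difference is at least `δ + 1` in
absolute value. -/
theorem separation_from_PiPrec (d k δ : ℕ) (hδ : δ < 2 ^ k)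
    (t : Fin d → ℕ) (ht : ∀ i, t i ∉ Lambda k δ)
    (t' : Fin d → ℕ) (ht' : t' ∈ PiPrec k t) :
    ∃ i, (δ : ℤ) + 1 ≤ |(t i : ℤ) - (t' i : ℤ)| := by
  obtain ⟨hle, hne⟩ := ht'
  rcases hle with heq | hlex
  · exact absurd heq hne
  · set K := kappaSucc (proj k t') (proj k t) - 1 with hK
    rw [proj_proj, proj_proj] at hlex
    obtain ⟨i, -, hi⟩ := hlex
    refine ⟨i, ?_⟩
    have hdiv : t' i / 2 ^ (max K k) < t i / 2 ^ (max K k) := by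
      have h2 : (0:ℕ) < 2 ^ (max K k) := by positivity
      simp only [proj] at hi
      exact lt_of_mul_lt_mul_right hi (le_of_lt h2)
    have := key_sep k (max K k) δ (t' i) (t i) (le_max_right _ _) hδ (ht i) hdiv
    calc (δ : ℤ) + 1 ≤ (t i : ℤ) - (t' i : ℤ) := this
      _ ≤ |(t i : ℤ) - (t' i : ℤ)| := le_abs_self _
end
end
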